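/- Let f₁, f₂ : [0,∞) → ℝ be cadlag with nonnegative jumps, define s(x,y) = sup_{z∈[x,y]}(f₂(z)-f₁(z⁻)), and let (g₁,g₂) be the Pitman transform: g₁(t) = f₁(t)+s(0,t), g₂(t) = f₂(t)-s(0,t). Then for all 0 ≤ x ≤ y: f₁(y) - f₂(x⁻) + s(x,y) = g₁(y) - g₂(x⁻) + sup_{z∈[x,y]}(g₂(z)-g₁(z⁻)). That is, the Pitman transform preserves two-line last passage values. -/

import Mathlib

open Filter Set

/-- Left limit with the convention `f(0⁻) = 0`. -/
noncomputable def lml (f : ℝ → ℝ) (z : ℝ) : ℝ := if z ≤ 0 then 0 else Function.leftLim f z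

/-- Cadlag on `[0, ∞)`: right-continuous at every `x ≥ 0`, left limits exist at every `x > 0`. -/
def Cadlag (f : ℝ → ℝ) : Prop :=
  (∀ x : ℝ, 0 ≤ x → ContinuousWithinAt f (Set.Ici x) x) ∧
  (∀ x : ℝ, 0 < x → ∃ l : ℝ, Filter.Tendsto f (nhdsWithin x (Set.Iio x)) (nhds l))

/-- All jumps are nonnegative (with the convention `f(0⁻) = 0`). -/
def NonnegJumps (f : ℝ → ℝ) : Prop := ∀ z : ℝ, 0 ≤ z → lml f z ≤ f z

/-- `S f₁ f₂ x y = sup_{z ∈ [x,y]} (f₂ z - f₁ (z⁻))`. -/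
noncomputable def S (f₁ f₂ : ℝ → ℝ) (x y : ℝ) : ℝ :=
  sSup ((fun z => f₂ z - lml f₁ z) '' Set.Icc x y)

/-- `Sm f₁ f₂ x y = sup_{z ∈ [x,y)} (f₂ z - f₁ (z⁻))`. -/
noncomputable def Sm (f₁ f₂ : ℝ → ℝ) (x y : ℝ) : ℝ :=
  sSup ((fun z => f₂ z - lml f₁ z) '' Set.Ico x y)

/-- First component of the Pitman transform. -/
noncomputable def Wp1 (f₁ f₂ : ℝ → ℝ) : ℝ → ℝ := fun t => f₁ t + S f₁ f₂ 0 t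

/-- Second component of the Pitman transform. -/
noncomputable def Wp2 (f₁ f₂ : ℝ → ℝ) : ℝ → ℝ := fun t => f₂ t - S f₁ f₂ 0 t

/-! With `h z = f₂ z - f₁ z⁻` and the running supremum `s t = sup_{[0,t]} h`, the right-hand
side equals `f₁ y - f₂ x⁻ + s y + s x⁻ + sup_{z ∈ [x,y]} (h z - s z - s z⁻)`, so the claim
reduces to `sup_{[x,y]} (h - s - s⁻) = sup_{[x,y]} h - s y - s x⁻`, a statement about `h` alone.
The inequality `≤` holds pointwise because `s y ≤ max (s z) (sup_{[z,y]} h)`. For `≥`: if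
`sup_{[x,y]} h ≤ s x⁻` then `s` is constant on `[x,y]`. Otherwise `s y = sup_{[x,y]} h`, and we
look at the first time `τ ≥ x` at which `s` exceeds `s x⁻`. Either `s` jumps at `τ`, and then
`h τ = s τ`; or `s` is right-continuous at `τ` (because `h` is upper semicontinuous from the
right, which is where the nonnegative jumps of `f₁` enter), and the points just after `τ` where
`h` exceeds `s x⁻` make `h - s - s⁻` arbitrarily close to `-s x⁻`. -/

open Function Topology Bornology

noncomputable def supOn (h : ℝ → ℝ) (x y : ℝ) : ℝ := sSup (h '' Icc x y)

section LeftLimit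

lemma lml_eq_leftLim_of_eq_zero {f : ℝ → ℝ} (hf : ∀ t < 0, f t = 0) : lml f = leftLim f := by
  funext z
  by_cases hz : z ≤ 0
  · rw [lml, if_pos hz]
    refine (leftLim_eq_of_tendsto (tendsto_const_nhds.congr' ?_)).symm
    filter_upwards [self_mem_nhdsWithin] with t ht using (hf t (lt_of_lt_of_le ht hz)).symm
  · rw [lml, if_neg hz]

variable {f g : ℝ → ℝ} {z : ℝ}

lemma lml_add (hf : 0 < z → ∃ l, Tendsto f (𝓝[<] z) (𝓝 l))
    (hg : 0 < z → ∃ l, Tendsto g (𝓝[<] z) (𝓝 l)) :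
    lml (fun t => f t + g t) z = lml f z + lml g z := by
  by_cases hz : z ≤ 0
  · simp [lml, hz]
  obtain ⟨l, hl⟩ := hf (not_le.1 hz)
  obtain ⟨m, hm⟩ := hg (not_le.1 hz)
  simp only [lml, if_neg hz]
  rw [leftLim_eq_of_tendsto hl, leftLim_eq_of_tendsto hm, leftLim_eq_of_tendsto (hl.add hm)]

lemma lml_sub (hf : 0 < z → ∃ l, Tendsto f (𝓝[<] z) (𝓝 l))
    (hg : 0 < z → ∃ l, Tendsto g (𝓝[<] z) (𝓝 l)) :
    lml (fun t => f t - g t) z = lml f z - lml g z := by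
  by_cases hz : z ≤ 0
  · simp [lml, hz]
  obtain ⟨l, hl⟩ := hf (not_le.1 hz)
  obtain ⟨m, hm⟩ := hg (not_le.1 hz)
  simp only [lml, if_neg hz]
  rw [leftLim_eq_of_tendsto hl, leftLim_eq_of_tendsto hm, leftLim_eq_of_tendsto (hl.sub hm)]

end LeftLimit

lemma Monotone.exists_first_passage {f : ℝ → ℝ} (hf : Monotone f) {x y a : ℝ} (hxy : x ≤ y)
    (ha : leftLim f x ≤ a) (hay : a < f y) :
    ∃ τ ∈ Icc x y, leftLim f τ ≤ a ∧ ∀ u > τ, ∃ z ∈ Icc τ y, z < u ∧ a < f z := by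
  set A := {z | z ∈ Icc x y ∧ a < f z}
  have hyA : y ∈ A := ⟨⟨hxy, le_rfl⟩, hay⟩
  have hAbdd : BddBelow A := ⟨x, fun z hz => hz.1.1⟩
  have hxτ : x ≤ sInf A := le_csInf ⟨y, hyA⟩ fun z hz => hz.1.1
  have hτy : sInf A ≤ y := csInf_le hAbdd hyA
  have hbefore : ∀ v < sInf A, f v ≤ a := by
    intro v hv
    rcases lt_or_ge v x with hvx | hvx
    · exact (hf.le_leftLim hvx).trans ha
    · by_contra! hav
      exact notMem_of_lt_csInf hv hAbdd ⟨⟨hvx, hv.le.trans hτy⟩, hav⟩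
  refine ⟨sInf A, ⟨hxτ, hτy⟩,
    _root_.le_of_tendsto (hf.tendsto_leftLim _) (eventually_nhdsWithin_of_forall hbefore),
    fun u hu => ?_⟩
  obtain ⟨z, hzA, hzu⟩ := exists_lt_of_csInf_lt ⟨y, hyA⟩ hu
  exact ⟨z, ⟨csInf_le hAbdd hzA, hzA.1.2⟩, hzu, hzA.2⟩

section RunningSup

variable {h : ℝ → ℝ}

lemma supOn_self (t : ℝ) : supOn h t t = h t := by
  simp [supOn]

lemma supOn_le {x y c : ℝ} (hxy : x ≤ y) (hc : ∀ z ∈ Icc x y, h z ≤ c) : supOn h x y ≤ c :=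
  csSup_le ((nonempty_Icc.2 hxy).image h) (forall_mem_image.2 hc)

lemma le_supOn (hbdd : ∀ b, BddAbove (h '' Icc 0 b)) {x y z : ℝ} (hx : 0 ≤ x)
    (hz : z ∈ Icc x y) : h z ≤ supOn h x y :=
  le_csSup ((hbdd y).mono (image_mono (Icc_subset_Icc_left hx))) (mem_image_of_mem h hz)

lemma supOn_zero_of_neg {t : ℝ} (ht : t < 0) : supOn h 0 t = 0 := by
  rw [supOn, Icc_eq_empty ht.not_ge, image_empty, Real.sSup_empty]

lemma lml_supOn_zero (h : ℝ → ℝ) : lml (supOn h 0) = leftLim (supOn h 0) :=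
  lml_eq_leftLim_of_eq_zero fun _ ht => supOn_zero_of_neg ht

lemma monotone_supOn_zero (hbdd : ∀ b, BddAbove (h '' Icc 0 b)) (h0 : 0 ≤ h 0) :
    Monotone (supOn h 0) := by
  intro t t' htt'
  rcases lt_or_ge t' 0 with ht' | ht'
  · rw [supOn_zero_of_neg ht', supOn_zero_of_neg (htt'.trans_lt ht')]
  rcases lt_or_ge t 0 with ht | ht
  · rw [supOn_zero_of_neg ht]
    exact h0.trans (le_supOn hbdd le_rfl ⟨le_rfl, ht'⟩)
  · exact supOn_le ht fun z hz => le_supOn hbdd le_rfl ⟨hz.1, hz.2.trans htt'⟩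

lemma supOn_zero_le_max_leftLim (hbdd : ∀ b, BddAbove (h '' Icc 0 b)) (h0 : 0 ≤ h 0)
    {x y : ℝ} (hx : 0 ≤ x) (hxy : x ≤ y) :
    supOn h 0 y ≤ max (leftLim (supOn h 0) x) (supOn h x y) := by
  refine supOn_le (hx.trans hxy) fun w hw => ?_
  rcases lt_or_ge w x with hwx | hwx
  · exact le_max_of_le_left ((le_supOn hbdd le_rfl ⟨hw.1, le_rfl⟩).trans
      ((monotone_supOn_zero hbdd h0).le_leftLim hwx))
  · exact le_max_of_le_right (le_supOn hbdd hx ⟨hwx, hw.2⟩)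

lemma supOn_zero_le_max (hbdd : ∀ b, BddAbove (h '' Icc 0 b)) (h0 : 0 ≤ h 0)
    {z y : ℝ} (hz : 0 ≤ z) (hzy : z ≤ y) : supOn h 0 y ≤ max (supOn h 0 z) (supOn h z y) :=
  (supOn_zero_le_max_leftLim hbdd h0 hz hzy).trans
    (max_le_max_right _ ((monotone_supOn_zero hbdd h0).leftLim_le le_rfl))

lemma eq_supOn_zero_of_leftLim_lt (hbdd : ∀ b, BddAbove (h '' Icc 0 b)) (h0 : 0 ≤ h 0)
    {τ : ℝ} (hτ : 0 ≤ τ) (hjump : leftLim (supOn h 0) τ < supOn h 0 τ) :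
    h τ = supOn h 0 τ := by
  have hmax := supOn_zero_le_max_leftLim hbdd h0 hτ le_rfl
  rw [supOn_self] at hmax
  exact le_antisymm (le_supOn hbdd le_rfl ⟨hτ, le_rfl⟩)
    ((le_max_iff.1 hmax).resolve_left hjump.not_ge)

lemma upperSemicontinuousWithinAt_supOn_zero (hbdd : ∀ b, BddAbove (h '' Icc 0 b))
    (h0 : 0 ≤ h 0) {τ : ℝ} (hτ : 0 ≤ τ) (husc : UpperSemicontinuousWithinAt h (Ioi τ) τ) :
    UpperSemicontinuousWithinAt (supOn h 0) (Ioi τ) τ := by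
  intro c hc
  have hτs : h τ ≤ supOn h 0 τ := le_supOn hbdd le_rfl ⟨hτ, le_rfl⟩
  obtain ⟨u, hτu, hu⟩ :=
    mem_nhdsGT_iff_exists_Ioo_subset.1 (husc ((supOn h 0 τ + c) / 2) (by linarith))
  filter_upwards [Ioo_mem_nhdsGT hτu] with v hv
  have hsup : supOn h τ v ≤ (supOn h 0 τ + c) / 2 := supOn_le hv.1.le fun _ hz => by
    rcases hz.1.eq_or_lt with rfl | hτz
    · linarith
    · exact (hu ⟨hτz, hz.2.trans_lt hv.2⟩).le
  rcases le_max_iff.1 (supOn_zero_le_max hbdd h0 hτ hv.1.le) with hv' | hv' <;> linarith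

lemma exists_lt_of_supOn_zero_le_lt (hbdd : ∀ b, BddAbove (h '' Icc 0 b)) (h0 : 0 ≤ h 0)
    {τ z a : ℝ} (hτ : 0 ≤ τ) (hτa : supOn h 0 τ ≤ a) (haz : a < supOn h 0 z) :
    ∃ v ∈ Ioc τ z, a < h v := by
  have hτz : τ ≤ z := le_of_not_gt fun hzτ =>
    (haz.trans_le ((monotone_supOn_zero hbdd h0) hzτ.le)).not_ge hτa
  have ha : a < supOn h τ z :=
    (lt_max_iff.1 (haz.trans_le (supOn_zero_le_max hbdd h0 hτ hτz))).resolve_left hτa.not_gt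
  obtain ⟨_, ⟨v, hv, rfl⟩, hav⟩ := exists_lt_of_lt_csSup ((nonempty_Icc.2 hτz).image h) ha
  refine ⟨v, ⟨lt_of_le_of_ne hv.1 ?_, hv.2⟩, hav⟩
  rintro rfl
  have := le_supOn hbdd le_rfl ⟨hτ, le_rfl⟩
  linarith

lemma supOn_zero_eq_supOn (hbdd : ∀ b, BddAbove (h '' Icc 0 b)) (h0 : 0 ≤ h 0) {x y : ℝ}
    (hx : 0 ≤ x) (hxy : x ≤ y) (hlt : leftLim (supOn h 0) x < supOn h x y) :
    supOn h 0 y = supOn h x y :=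
  le_antisymm ((supOn_zero_le_max_leftLim hbdd h0 hx hxy).trans (max_le hlt.le le_rfl))
    (supOn_le hxy fun _ hz => le_supOn hbdd le_rfl ⟨hx.trans hz.1, hz.2⟩)

end RunningSup

/-- For `h = jumpWeight f₁ f₂` this is `g₂ z - g₁ (z⁻)`, `(g₁, g₂)` the Pitman transform. -/
noncomputable def pitmanWeight (h : ℝ → ℝ) (z : ℝ) : ℝ :=
  h z - supOn h 0 z - leftLim (supOn h 0) z

section PitmanWeight

variable {h : ℝ → ℝ} {x y : ℝ}

lemma pitmanWeight_le (hbdd : ∀ b, BddAbove (h '' Icc 0 b)) (h0 : 0 ≤ h 0) (hx : 0 ≤ x)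
    {z : ℝ} (hz : z ∈ Icc x y) :
    pitmanWeight h z ≤ supOn h x y - supOn h 0 y - leftLim (supOn h 0) x := by
  have hz0 : 0 ≤ z := hx.trans hz.1
  have ha := (monotone_supOn_zero hbdd h0).leftLim hz.1
  have hzs : h z ≤ supOn h 0 z := le_supOn hbdd le_rfl ⟨hz0, le_rfl⟩
  have hzM : h z ≤ supOn h x y := le_supOn hbdd hx hz
  have hzyM : supOn h z y ≤ supOn h x y :=
    supOn_le hz.2 fun w hw => le_supOn hbdd hx ⟨hz.1.trans hw.1, hw.2⟩
  unfold pitmanWeight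
  rcases le_max_iff.1 (supOn_zero_le_max hbdd h0 hz0 hz.2) with hy | hy <;> linarith

lemma exists_lt_pitmanWeight_of_supOn_le (hbdd : ∀ b, BddAbove (h '' Icc 0 b)) (h0 : 0 ≤ h 0)
    (hx : 0 ≤ x) (hxy : x ≤ y) (hle : supOn h x y ≤ leftLim (supOn h 0) x) {w : ℝ}
    (hw : w < supOn h x y - supOn h 0 y - leftLim (supOn h 0) x) :
    ∃ z ∈ Icc x y, w < pitmanWeight h z := by
  have hmono := monotone_supOn_zero hbdd h0
  have hsy : supOn h 0 y ≤ leftLim (supOn h 0) x :=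
    (supOn_zero_le_max_leftLim hbdd h0 hx hxy).trans (max_le le_rfl hle)
  have hys := hmono.leftLim_le hxy
  obtain ⟨_, ⟨z, hz, rfl⟩, hwz⟩ := exists_lt_of_lt_csSup ((nonempty_Icc.2 hxy).image h)
    (show w + 2 * leftLim (supOn h 0) x < supOn h x y by linarith)
  refine ⟨z, hz, ?_⟩
  have := hmono hz.2
  have := hmono.leftLim_le (le_refl z)
  have := hmono.leftLim hz.1
  unfold pitmanWeight
  linarith

lemma exists_lt_pitmanWeight_of_lt_supOn (hbdd : ∀ b, BddAbove (h '' Icc 0 b)) (h0 : 0 ≤ h 0)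
    (husc : ∀ t, 0 ≤ t → UpperSemicontinuousWithinAt h (Ioi t) t) (hx : 0 ≤ x) (hxy : x ≤ y)
    (hlt : leftLim (supOn h 0) x < supOn h x y) {w : ℝ} (hw : w < -leftLim (supOn h 0) x) :
    ∃ z ∈ Icc x y, w < pitmanWeight h z := by
  have hmono := monotone_supOn_zero hbdd h0
  have hsy := supOn_zero_eq_supOn hbdd h0 hx hxy hlt
  set s := supOn h 0
  set a := leftLim s x
  obtain ⟨τ, ⟨hxτ, hτy⟩, hleftτ, hafter⟩ := hmono.exists_first_passage hxy le_rfl (hsy ▸ hlt)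
  have hτ0 : 0 ≤ τ := hx.trans hxτ
  rcases lt_or_ge a (s τ) with hjump | hcont
  · have := eq_supOn_zero_of_leftLim_lt hbdd h0 hτ0 (hleftτ.trans_lt hjump)
    refine ⟨τ, ⟨hxτ, hτy⟩, ?_⟩
    unfold pitmanWeight
    linarith
  · obtain ⟨u, hτu, hu⟩ := mem_nhdsGT_iff_exists_Ioo_subset.1
      (upperSemicontinuousWithinAt_supOn_zero hbdd h0 hτ0 (husc τ hτ0) (a + (-a - w) / 2)
        (by linarith))
    obtain ⟨z, hz, hzu, haz⟩ := hafter u hτu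
    obtain ⟨v, hv, hav⟩ := exists_lt_of_supOn_zero_le_lt hbdd h0 hτ0 hcont haz
    have hsv : s v < a + (-a - w) / 2 := hu ⟨hv.1, hv.2.trans_lt hzu⟩
    have := hmono.leftLim_le (le_refl v)
    refine ⟨v, ⟨hxτ.trans hv.1.le, hv.2.trans hz.2⟩, ?_⟩
    unfold pitmanWeight
    linarith

theorem supOn_pitmanWeight (hbdd : ∀ b, BddAbove (h '' Icc 0 b)) (h0 : 0 ≤ h 0)
    (husc : ∀ t, 0 ≤ t → UpperSemicontinuousWithinAt h (Ioi t) t) (hx : 0 ≤ x) (hxy : x ≤ y) :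
    supOn (pitmanWeight h) x y = supOn h x y - supOn h 0 y - leftLim (supOn h 0) x := by
  refine csSup_eq_of_forall_le_of_forall_lt_exists_gt ((nonempty_Icc.2 hxy).image _)
    (forall_mem_image.2 fun z hz => pitmanWeight_le hbdd h0 hx hz) fun w hw => ?_
  obtain ⟨z, hz, hwz⟩ : ∃ z ∈ Icc x y, w < pitmanWeight h z := by
    rcases le_or_gt (supOn h x y) (leftLim (supOn h 0) x) with hle | hlt
    · exact exists_lt_pitmanWeight_of_supOn_le hbdd h0 hx hxy hle hw
    · rw [supOn_zero_eq_supOn hbdd h0 hx hxy hlt] at hw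
      exact exists_lt_pitmanWeight_of_lt_supOn hbdd h0 husc hx hxy hlt (by linarith)
  exact ⟨_, mem_image_of_mem _ hz, hwz⟩

end PitmanWeight

namespace Cadlag

variable {f : ℝ → ℝ}

lemma tendsto_lml (hf : Cadlag f) {z : ℝ} (hz : 0 < z) : Tendsto f (𝓝[<] z) (𝓝 (lml f z)) := by
  obtain ⟨l, hl⟩ := hf.2 z hz
  rwa [lml, if_neg hz.not_ge, leftLim_eq_of_tendsto hl]

lemma tendsto_lml_nhdsGT (hf : Cadlag f) {t : ℝ} (ht : 0 ≤ t) :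
    Tendsto (lml f) (𝓝[>] t) (𝓝 (f t)) := by
  refine (closed_nhds_basis (f t)).tendsto_right_iff.2 fun V ⟨hV, hVc⟩ => ?_
  obtain ⟨u, hu, hsub⟩ := mem_nhdsGE_iff_exists_Ico_subset.1 (hf.1 t ht hV)
  filter_upwards [Ioo_mem_nhdsGT hu] with z hz
  refine hVc.mem_of_tendsto (hf.tendsto_lml (ht.trans_lt hz.1)) ?_
  filter_upwards [Ioo_mem_nhdsLT hz.1] with w hw using hsub ⟨hw.1.le, hw.2.trans hz.2⟩

lemma isBounded_image_Icc (hf : Cadlag f) (b : ℝ) : IsBounded (f '' Icc 0 b) := by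
  refine isCompact_Icc.induction_on (p := fun s => IsBounded (f '' s)) (by simp)
    (fun s t hst ht => ht.subset (image_mono hst))
    (fun s t hs ht => by simpa only [image_union] using hs.union ht) fun x hx => ?_
  have hright : f ⁻¹' Metric.ball (f x) 1 ∈ 𝓝[≥] x :=
    hf.1 x hx.1 (Metric.ball_mem_nhds _ one_pos)
  rcases hx.1.eq_or_lt with rfl | hx0
  · exact ⟨_, nhdsWithin_mono _ (fun t ht => ht.1) hright,
      Metric.isBounded_ball.subset (image_preimage_subset _ _)⟩
  obtain ⟨l, hl⟩ := hf.2 x hx0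
  refine ⟨f ⁻¹' (Metric.ball l 1 ∪ Metric.ball (f x) 1), nhdsWithin_le_nhds ?_,
    (Metric.isBounded_ball.union Metric.isBounded_ball).subset (image_preimage_subset _ _)⟩
  rw [← nhdsLT_sup_nhdsGE, mem_sup]
  exact ⟨mem_of_superset (hl (Metric.ball_mem_nhds _ one_pos)) (preimage_mono subset_union_left),
    mem_of_superset hright (preimage_mono subset_union_right)⟩

lemma isBounded_lml_image_Icc (hf : Cadlag f) (b : ℝ) : IsBounded (lml f '' Icc 0 b) := by
  refine (((hf.isBounded_image_Icc b).closure).insert 0).subset ?_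
  rintro _ ⟨z, hz, rfl⟩
  rcases hz.1.eq_or_lt with rfl | hz0
  · simp [lml]
  refine Or.inr (mem_closure_of_tendsto (hf.tendsto_lml hz0) ?_)
  filter_upwards [Ioo_mem_nhdsLT hz0] with w hw
  exact mem_image_of_mem f ⟨hw.1.le, hw.2.le.trans hz.2⟩

end Cadlag

section JumpWeight

noncomputable def jumpWeight (f₁ f₂ : ℝ → ℝ) (z : ℝ) : ℝ := f₂ z - lml f₁ z

lemma S_eq_supOn (f₁ f₂ : ℝ → ℝ) : S f₁ f₂ = supOn (jumpWeight f₁ f₂) := rfl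

variable {f₁ f₂ : ℝ → ℝ}

lemma bddAbove_jumpWeight_image_Icc (h₁ : Cadlag f₁) (h₂ : Cadlag f₂) (b : ℝ) :
    BddAbove (jumpWeight f₁ f₂ '' Icc 0 b) := by
  obtain ⟨C₁, hC₁⟩ := (h₁.isBounded_lml_image_Icc b).bddBelow
  obtain ⟨C₂, hC₂⟩ := (h₂.isBounded_image_Icc b).bddAbove
  refine ⟨C₂ - C₁, forall_mem_image.2 fun z hz => ?_⟩
  have := hC₁ (mem_image_of_mem _ hz)
  have := hC₂ (mem_image_of_mem _ hz)
  simp only [jumpWeight]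
  linarith

lemma jumpWeight_zero_nonneg (hj₂ : NonnegJumps f₂) : 0 ≤ jumpWeight f₁ f₂ 0 := by
  simpa [jumpWeight, lml, NonnegJumps] using hj₂ 0 le_rfl

lemma upperSemicontinuousWithinAt_jumpWeight (h₁ : Cadlag f₁) (h₂ : Cadlag f₂)
    (hj₁ : NonnegJumps f₁) {t : ℝ} (ht : 0 ≤ t) :
    UpperSemicontinuousWithinAt (jumpWeight f₁ f₂) (Ioi t) t := by
  intro c hc
  have hlim : Tendsto (jumpWeight f₁ f₂) (𝓝[>] t) (𝓝 (f₂ t - f₁ t)) :=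
    ((h₂.1 t ht).mono Ioi_subset_Ici_self).tendsto.sub (h₁.tendsto_lml_nhdsGT ht)
  have := hj₁ t ht
  exact hlim.eventually (gt_mem_nhds (by simp only [jumpWeight] at hc; linarith))

lemma exists_tendsto_S_zero_nhdsLT (h₁ : Cadlag f₁) (h₂ : Cadlag f₂) (hj₂ : NonnegJumps f₂)
    (z : ℝ) : ∃ l, Tendsto (S f₁ f₂ 0) (𝓝[<] z) (𝓝 l) :=
  ⟨_, (monotone_supOn_zero (bddAbove_jumpWeight_image_Icc h₁ h₂)
    (jumpWeight_zero_nonneg hj₂)).tendsto_leftLim z⟩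

lemma lml_Wp1 (h₁ : Cadlag f₁) (h₂ : Cadlag f₂) (hj₂ : NonnegJumps f₂) (z : ℝ) :
    lml (Wp1 f₁ f₂) z = lml f₁ z + leftLim (S f₁ f₂ 0) z := by
  unfold Wp1
  rw [lml_add (h₁.2 z) fun _ => exists_tendsto_S_zero_nhdsLT h₁ h₂ hj₂ z, S_eq_supOn,
    lml_supOn_zero]

lemma lml_Wp2 (h₁ : Cadlag f₁) (h₂ : Cadlag f₂) (hj₂ : NonnegJumps f₂) (z : ℝ) :
    lml (Wp2 f₁ f₂) z = lml f₂ z - leftLim (S f₁ f₂ 0) z := by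
  unfold Wp2
  rw [lml_sub (h₂.2 z) fun _ => exists_tendsto_S_zero_nhdsLT h₁ h₂ hj₂ z, S_eq_supOn,
    lml_supOn_zero]

lemma S_Wp1_Wp2 (h₁ : Cadlag f₁) (h₂ : Cadlag f₂) (hj₂ : NonnegJumps f₂) :
    S (Wp1 f₁ f₂) (Wp2 f₁ f₂) = supOn (pitmanWeight (jumpWeight f₁ f₂)) := by
  ext x y
  refine congrArg sSup (image_congr fun z _ => ?_)
  rw [lml_Wp1 h₁ h₂ hj₂, Wp2, pitmanWeight, jumpWeight, S_eq_supOn]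
  ring

end JumpWeight

theorem stmt4 (f₁ f₂ : ℝ → ℝ) (h₁ : Cadlag f₁) (h₂ : Cadlag f₂)
    (hj₁ : NonnegJumps f₁) (hj₂ : NonnegJumps f₂)
    (x y : ℝ) (hx : 0 ≤ x) (hxy : x ≤ y) :
    f₁ y - lml f₂ x + S f₁ f₂ x y
      = Wp1 f₁ f₂ y - lml (Wp2 f₁ f₂) x + S (Wp1 f₁ f₂) (Wp2 f₁ f₂) x y := by
  rw [S_Wp1_Wp2 h₁ h₂ hj₂, lml_Wp2 h₁ h₂ hj₂, Wp1,
    supOn_pitmanWeight (bddAbove_jumpWeight_image_Icc h₁ h₂) (jumpWeight_zero_nonneg hj₂)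
      (fun _ ht => upperSemicontinuousWithinAt_jumpWeight h₁ h₂ hj₁ ht) hx hxy, S_eq_supOn]
  ring
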